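/- Let F ∈ 𝓕 and s > 0. Then the Hölder space C^s(ℝ²) embeds continuously into LMO_F: there exists C > 0 such that ‖f‖_{LMO_F} ≤ C‖f‖_{C^s} for all f ∈ C^s. -/

import Mathlib

open MeasureTheory Metric Real Filter

noncomputable section

/-- The plane `ℝ²`. -/
abbrev Plane := EuclideanSpace ℝ (Fin 2)

/-- Average of `f` over the ball `B(c,r)` (with respect to Lebesgue measure). -/
def ballAvg (f : Plane → ℝ) (c : Plane) (r : ℝ) : ℝ := ⨍ y in ball c r, f y

/-- `K` is a bound for all mean oscillations of `f` (i.e. `‖f‖_BMO ≤ K`). -/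
def OscBound (f : Plane → ℝ) (K : ℝ) : Prop :=
  ∀ c r, 0 < r → (⨍ y in ball c r, |f y - ballAvg f c r|) ≤ K

/-- The `BMO` seminorm of `f`, as a supremum of mean oscillations. -/
def bmoNorm (f : Plane → ℝ) : ℝ :=
  sSup {m | ∃ c r, 0 < r ∧ m = ⨍ y in ball c r, |f y - ballAvg f c r|}

/-- `K` bounds the second (weighted pair of balls) part of the `BMO_F` norm of `f`. -/
def PairBoundF (F : ℝ → ℝ) (f : Plane → ℝ) (K : ℝ) : Prop :=
  ∀ c₁ r₁ c₂ r₂, 0 < r₂ → 0 < r₁ → r₁ ≤ 1 → ball c₂ (2 * r₂) ⊆ ball c₁ r₁ →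
    |ballAvg f c₂ r₂ - ballAvg f c₁ r₁| ≤ K * F ((1 - Real.log r₂) / (1 - Real.log r₁))

/-- The `BMO_F` norm of `f`. -/
def bmoFNorm (F : ℝ → ℝ) (f : Plane → ℝ) : ℝ :=
  bmoNorm f +
    sSup {m | ∃ c₁ r₁ c₂ r₂, 0 < r₂ ∧ 0 < r₁ ∧ r₁ ≤ 1 ∧ ball c₂ (2 * r₂) ⊆ ball c₁ r₁ ∧
      m = |ballAvg f c₂ r₂ - ballAvg f c₁ r₁| / F ((1 - Real.log r₂) / (1 - Real.log r₁))}

/-- Membership in the space `BMO_F`. -/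
def MemBMOF (F : ℝ → ℝ) (f : Plane → ℝ) : Prop :=
  LocallyIntegrable f volume ∧ ∃ K, OscBound f K ∧ PairBoundF F f K

/-- The `LMO_F` norm of `f`. -/
def lmoFNorm (F : ℝ → ℝ) (f : Plane → ℝ) : ℝ :=
  sSup {m | ∃ c r, 0 < r ∧ r ≤ 1 ∧
      m = F (1 - Real.log r) * ⨍ y in ball c r, |f y - ballAvg f c r|} +
  sSup {m | ∃ c₁ r₁ c₂ r₂, 0 < r₂ ∧ 0 < r₁ ∧ r₁ ≤ 1 ∧ ball c₂ (2 * r₂) ⊆ ball c₁ r₁ ∧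
      m = F (1 - Real.log r₁) * |ballAvg f c₂ r₂ - ballAvg f c₁ r₁|}

/-- Membership in the space `LMO_F`. -/
def MemLMOF (F : ℝ → ℝ) (f : Plane → ℝ) : Prop :=
  LocallyIntegrable f volume ∧ ∃ K,
    (∀ c r, 0 < r → r ≤ 1 →
      F (1 - Real.log r) * ⨍ y in ball c r, |f y - ballAvg f c r| ≤ K) ∧
    (∀ c₁ r₁ c₂ r₂, 0 < r₂ → 0 < r₁ → r₁ ≤ 1 → ball c₂ (2 * r₂) ⊆ ball c₁ r₁ →
      F (1 - Real.log r₁) * |ballAvg f c₂ r₂ - ballAvg f c₁ r₁| ≤ K)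

/-- The `L^∞` norm. -/
def supNorm (f : Plane → ℝ) : ℝ := (eLpNorm f ⊤ volume).toReal

/-- The `L^p` norm for a real exponent `p`. -/
def lpNorm (p : ℝ) (f : Plane → ℝ) : ℝ := (eLpNorm f (ENNReal.ofReal p) volume).toReal

/-- The class `𝓕` of admissible weight functions: nondecreasing on `[1,∞)`, `≥ 1` there,
blowing up at infinity, with the exponential-integral decay condition and submultiplicativity. -/
def ClassF (F : ℝ → ℝ) : Prop :=
  (∀ x, 1 ≤ x → 1 ≤ F x) ∧ (∀ x y, 1 ≤ x → x ≤ y → F x ≤ F y) ∧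
  Tendsto F atTop atTop ∧
  ∃ C, 0 < C ∧
    (∀ l x, 1 ≤ l → l ≤ x →
      (∫ y in Set.Ici x, Real.exp (-y / l) * F y) ≤ C * l * Real.exp (-x / l) * F x) ∧
    (∀ x y, 1 ≤ x → 1 ≤ y → F (x * y) ≤ C * F x * F y)

end

/-!
Submultiplicativity makes every `F ∈ 𝓕` doubling, hence of polynomial growth `F x ≲ x ^ α`, so
`F (1 - log r) * r ^ s ≲ (1 - log r) ^ α * r ^ s` stays bounded on `0 < r ≤ 1`. For an
`s`-Hölder `f` with constant `H`, both the mean oscillation over a ball of radius `r` and the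
difference of the averages over two nested balls inside a ball of radius `r` are `O(H r ^ s)`.
-/

theorem one_le_one_sub_log {r : ℝ} (hr : 0 < r) (hr1 : r ≤ 1) : 1 ≤ 1 - log r := by
  linarith [log_nonpos hr.le hr1]

theorem one_sub_log_rpow_mul_rpow_le {r α s : ℝ} (hr : 0 < r) (hr1 : r ≤ 1) (hα : 0 < α)
    (hs : 0 < s) : (1 - log r) ^ α * r ^ s ≤ (1 + α / s) ^ α := by
  have hlog : |log r * r ^ (s / α)| < α / s := by
    simpa using abs_log_mul_self_rpow_lt r (s / α) hr hr1 (by positivity)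
  have hbase : (1 - log r) * r ^ (s / α) ≤ 1 + α / s := by
    have : r ^ (s / α) ≤ 1 := rpow_le_one hr.le hr1 (by positivity)
    nlinarith [neg_abs_le (log r * r ^ (s / α))]
  calc (1 - log r) ^ α * r ^ s = ((1 - log r) * r ^ (s / α)) ^ α := by
        rw [mul_rpow (by linarith [one_le_one_sub_log hr hr1]) (by positivity),
          ← rpow_mul hr.le, div_mul_cancel₀ s hα.ne']
    _ ≤ (1 + α / s) ^ α :=
        rpow_le_rpow (by have := one_le_one_sub_log hr hr1; positivity) hbase hα.le

theorem le_mul_rpow_of_doubling {F : ℝ → ℝ} {α : ℝ} (hα : 0 ≤ α)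
    (h1 : 0 ≤ F 1) (hmono : ∀ x y, 1 ≤ x → x ≤ y → F x ≤ F y)
    (hdouble : ∀ x, 1 ≤ x → F (2 * x) ≤ 2 ^ α * F x) {x : ℝ} (hx : 1 ≤ x) :
    F x ≤ F 1 * (2 * x) ^ α := by
  have dyadic : ∀ n : ℕ, ∀ t, 1 ≤ t → t ≤ 2 ^ n → F t ≤ F 1 * ((2 : ℝ) ^ n) ^ α := by
    intro n
    induction n with
    | zero =>
      intro t ht1 htn
      rw [pow_zero] at htn
      simp [le_antisymm htn ht1]
    | succ n ih =>
      intro t ht1 htn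
      set y := max 1 (t / 2)
      have hy1 : 1 ≤ y := le_max_left _ _
      have hyn : y ≤ 2 ^ n :=
        max_le (one_le_pow₀ one_le_two) (by rw [pow_succ] at htn; linarith)
      calc F t ≤ F (2 * y) := hmono t _ ht1 (by linarith [le_max_right 1 (t / 2)])
        _ ≤ 2 ^ α * F y := hdouble y hy1
        _ ≤ 2 ^ α * (F 1 * ((2 : ℝ) ^ n) ^ α) := by gcongr; exact ih y hy1 hyn
        _ = F 1 * ((2 : ℝ) ^ (n + 1)) ^ α := by
          rw [pow_succ, mul_rpow (by positivity) (by norm_num)]; ring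
  set n := ⌈logb 2 x⌉₊
  have hlogb : 0 ≤ logb 2 x := logb_nonneg one_lt_two hx
  have hxn : x ≤ 2 ^ n := by
    rw [← rpow_natCast, ← logb_le_iff_le_rpow one_lt_two (by linarith)]
    exact Nat.le_ceil _
  have hnx : (2 : ℝ) ^ n ≤ 2 * x := by
    calc (2 : ℝ) ^ n = 2 ^ (n : ℝ) := (rpow_natCast 2 n).symm
      _ ≤ 2 ^ (logb 2 x + 1) :=
        rpow_le_rpow_of_exponent_le one_le_two (Nat.ceil_lt_add_one hlogb).le
      _ = 2 * x := by
        rw [rpow_add two_pos, rpow_logb two_pos (by norm_num) (by linarith), rpow_one]; ring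
  calc F x ≤ F 1 * ((2 : ℝ) ^ n) ^ α := dyadic n x hx hxn
    _ ≤ F 1 * (2 * x) ^ α := by gcongr

namespace ClassF

variable {F : ℝ → ℝ}

theorem exists_doubling (hF : ClassF F) :
    ∃ α : ℝ, 0 < α ∧ ∀ x, 1 ≤ x → F (2 * x) ≤ 2 ^ α * F x := by
  obtain ⟨hge, -, -, C, hC, -, hmul⟩ := hF
  have hCF : 0 < C * F 2 := mul_pos hC (by linarith [hge 2 one_le_two])
  refine ⟨max 1 (logb 2 (C * F 2)), by positivity, fun x hx => ?_⟩
  calc F (2 * x) ≤ C * F 2 * F x := hmul 2 x one_le_two hx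
    _ = 2 ^ logb 2 (C * F 2) * F x := by rw [rpow_logb two_pos (by norm_num) hCF]
    _ ≤ 2 ^ max 1 (logb 2 (C * F 2)) * F x := by
      gcongr
      · linarith [hge x hx]
      · exact one_le_two
      · exact le_max_right _ _

theorem exists_weight_mul_rpow_le (hF : ClassF F) {s : ℝ} (hs : 0 < s) :
    ∃ K : ℝ, 0 < K ∧ ∀ r, 0 < r → r ≤ 1 → F (1 - log r) * r ^ s ≤ K := by
  obtain ⟨α, hα, hdouble⟩ := hF.exists_doubling
  have hF1 : 1 ≤ F 1 := hF.1 1 le_rfl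
  refine ⟨F 1 * 2 ^ α * (1 + α / s) ^ α, by positivity, fun r hr hr1 => ?_⟩
  have hx := one_le_one_sub_log hr hr1
  have hgrowth := le_mul_rpow_of_doubling hα.le (by linarith) hF.2.1 hdouble hx
  calc F (1 - log r) * r ^ s ≤ F 1 * (2 * (1 - log r)) ^ α * r ^ s :=
      mul_le_mul_of_nonneg_right hgrowth (by positivity)
    _ = F 1 * 2 ^ α * ((1 - log r) ^ α * r ^ s) := by
      rw [mul_rpow zero_le_two (by linarith)]; ring
    _ ≤ F 1 * 2 ^ α * (1 + α / s) ^ α := by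
      gcongr
      exact one_sub_log_rpow_mul_rpow_le hr hr1 hα hs

end ClassF

theorem abs_setAverage_sub_le {X : Type*} [MeasurableSpace X] {μ : Measure X} {t : Set X}
    (ht : MeasurableSet t) (h0 : μ t ≠ 0) (hfin : μ t ≠ ⊤) {g : X → ℝ}
    (hg : IntegrableOn g t μ) {a Q : ℝ} (hQ : ∀ z ∈ t, |g z - a| ≤ Q) :
    |(⨍ z in t, g z ∂μ) - a| ≤ Q := by
  have hmem : ∀ᵐ z ∂μ.restrict t, g z ∈ closedBall a Q :=
    ae_restrict_of_forall_mem ht fun z hz => by simpa [Real.dist_eq] using hQ z hz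
  simpa [Real.dist_eq] using
    (convex_closedBall a Q).set_average_mem isClosed_closedBall h0 hfin hmem hg

theorem nonneg_of_abs_sub_le_mul_rpow {E : Type*} [NormedAddCommGroup E] [Nontrivial E]
    {f : E → ℝ} {H s : ℝ} (hf : ∀ x y, |f x - f y| ≤ H * ‖x - y‖ ^ s) : 0 ≤ H := by
  obtain ⟨y, hy⟩ := exists_ne (0 : E)
  have hpos : 0 < ‖0 - y‖ ^ s := rpow_pos_of_pos (by simpa using hy) s
  exact nonneg_of_mul_nonneg_left ((abs_nonneg _).trans (hf 0 y)) hpos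

theorem abs_sub_le_of_mem_ball {E : Type*} [SeminormedAddCommGroup E] {f : E → ℝ} {H s : ℝ}
    (hH : 0 ≤ H) (hs : 0 ≤ s) (hf : ∀ x y, |f x - f y| ≤ H * ‖x - y‖ ^ s) {c x y : E} {r : ℝ}
    (hx : x ∈ ball c r) (hy : y ∈ ball c r) : |f x - f y| ≤ H * (2 * r) ^ s := by
  have hxy : ‖x - y‖ ≤ 2 * r := by
    rw [← dist_eq_norm]
    linarith [dist_triangle_right x y c, mem_ball.1 hx, mem_ball.1 hy]
  exact (hf x y).trans (by gcongr)

theorem MeasureTheory.LocallyIntegrable.integrableOn_ball {X E : Type*} [PseudoMetricSpace X]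
    [ProperSpace X] [MeasurableSpace X] {μ : Measure X} [NormedAddCommGroup E] {f : X → E}
    (hf : LocallyIntegrable f μ) (c : X) (r : ℝ) : IntegrableOn f (ball c r) μ :=
  (hf.integrableOn_isCompact (isCompact_closedBall c r)).mono_set ball_subset_closedBall

section Holder

variable {f : Plane → ℝ} {H s : ℝ}

theorem abs_ballAvg_sub_le_of_subset (hH : 0 ≤ H) (hs : 0 ≤ s)
    (hf : ∀ x y, |f x - f y| ≤ H * ‖x - y‖ ^ s) (hloc : LocallyIntegrable f volume)
    {c c' a : Plane} {r r' : ℝ} (hr' : 0 < r')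
    (hsub : ball c' r' ⊆ ball c r) (ha : a ∈ ball c r) :
    |ballAvg f c' r' - f a| ≤ H * (2 * r) ^ s :=
  abs_setAverage_sub_le measurableSet_ball (measure_ball_pos volume c' hr').ne'
    measure_ball_lt_top.ne
    (hloc.integrableOn_ball c' r') fun _ hz => abs_sub_le_of_mem_ball hH hs hf (hsub hz) ha

theorem setAverage_abs_sub_ballAvg_le (hH : 0 ≤ H) (hs : 0 ≤ s)
    (hf : ∀ x y, |f x - f y| ≤ H * ‖x - y‖ ^ s) (hloc : LocallyIntegrable f volume)
    {c : Plane} {r : ℝ} (hr : 0 < r) :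
    ⨍ y in ball c r, |f y - ballAvg f c r| ≤ H * (2 * r) ^ s := by
  have hint : IntegrableOn (fun y => |f y - ballAvg f c r|) (ball c r) volume :=
    ((hloc.integrableOn_ball c r).sub (integrableOn_const measure_ball_lt_top.ne)).abs
  have h := abs_setAverage_sub_le (a := 0) measurableSet_ball
    (measure_ball_pos volume c hr).ne' measure_ball_lt_top.ne hint fun y hy => by
      rw [sub_zero, abs_abs, abs_sub_comm]
      exact abs_ballAvg_sub_le_of_subset hH hs hf hloc hr subset_rfl hy
  exact (le_abs_self _).trans (by simpa using h)

theorem abs_ballAvg_sub_ballAvg_le (hH : 0 ≤ H) (hs : 0 ≤ s)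
    (hf : ∀ x y, |f x - f y| ≤ H * ‖x - y‖ ^ s) (hloc : LocallyIntegrable f volume)
    {c₁ c₂ : Plane} {r₁ r₂ : ℝ} (hr₁ : 0 < r₁) (hr₂ : 0 < r₂)
    (hsub : ball c₂ (2 * r₂) ⊆ ball c₁ r₁) :
    |ballAvg f c₂ r₂ - ballAvg f c₁ r₁| ≤ 2 * (H * (2 * r₁) ^ s) := by
  have hc₂ : c₂ ∈ ball c₁ r₁ := hsub (mem_ball_self (by positivity))
  have h₂ := abs_ballAvg_sub_le_of_subset hH hs hf hloc hr₂
    ((ball_subset_ball (by linarith)).trans hsub) hc₂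
  have h₁ := abs_ballAvg_sub_le_of_subset hH hs hf hloc hr₁ subset_rfl hc₂
  calc |ballAvg f c₂ r₂ - ballAvg f c₁ r₁|
      ≤ |ballAvg f c₂ r₂ - f c₂| + |f c₂ - ballAvg f c₁ r₁| := abs_sub_le _ _ _
    _ ≤ 2 * (H * (2 * r₁) ^ s) := by rw [abs_sub_comm (f c₂)]; linarith

end Holder

theorem lmoFNorm_le {F : ℝ → ℝ} {f : Plane → ℝ} {K : ℝ} (hK : 0 ≤ K)
    (hosc : ∀ c r, 0 < r → r ≤ 1 →
      F (1 - log r) * ⨍ y in ball c r, |f y - ballAvg f c r| ≤ K)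
    (hpair : ∀ c₁ r₁ c₂ r₂, 0 < r₂ → 0 < r₁ → r₁ ≤ 1 → ball c₂ (2 * r₂) ⊆ ball c₁ r₁ →
      F (1 - log r₁) * |ballAvg f c₂ r₂ - ballAvg f c₁ r₁| ≤ K) :
    lmoFNorm F f ≤ 2 * K := by
  have h₁ := Real.sSup_le (s := {m | ∃ c r, 0 < r ∧ r ≤ 1 ∧
      m = F (1 - log r) * ⨍ y in ball c r, |f y - ballAvg f c r|})
    (by rintro _ ⟨c, r, hr, hr1, rfl⟩; exact hosc c r hr hr1) hK
  have h₂ := Real.sSup_le (s := {m | ∃ c₁ r₁ c₂ r₂, 0 < r₂ ∧ 0 < r₁ ∧ r₁ ≤ 1 ∧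
      ball c₂ (2 * r₂) ⊆ ball c₁ r₁ ∧ m = F (1 - log r₁) * |ballAvg f c₂ r₂ - ballAvg f c₁ r₁|})
    (by rintro _ ⟨c₁, r₁, c₂, r₂, hr₂, hr₁, hr₁1, hsub, rfl⟩
        exact hpair c₁ r₁ c₂ r₂ hr₂ hr₁ hr₁1 hsub) hK
  unfold lmoFNorm
  linarith

theorem holder_embeds_lmoF_general (F : ℝ → ℝ) (hF : ClassF F)
    (s : ℝ) (hs : 0 < s) :
    ∃ C : ℝ, 0 < C ∧
      ∀ (f : Plane → ℝ) (M H : ℝ), Measurable f →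
        (∀ x, |f x| ≤ M) →
        (∀ x y : Plane, |f x - f y| ≤ H * ‖x - y‖ ^ s) →
        MemLMOF F f ∧ lmoFNorm F f ≤ C * (M + H) := by
  obtain ⟨K, hK, hweight⟩ := hF.exists_weight_mul_rpow_le hs
  refine ⟨4 * 2 ^ s * K, by positivity, fun f M H hmeas hM hf => ?_⟩
  have hH : 0 ≤ H := nonneg_of_abs_sub_le_mul_rpow hf
  have hM0 : 0 ≤ M := (abs_nonneg _).trans (hM 0)
  have hloc : LocallyIntegrable f volume :=
    (memLp_top_of_bound hmeas.aestronglyMeasurable M (ae_of_all _ hM)).locallyIntegrable le_top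
  have hweighted : ∀ r, 0 < r → r ≤ 1 → ∀ q, q ≤ 2 * (H * (2 * r) ^ s) →
      F (1 - log r) * q ≤ 2 * 2 ^ s * K * H := fun r hr hr1 q hq =>
    calc F (1 - log r) * q ≤ F (1 - log r) * (2 * (H * (2 * r) ^ s)) :=
          mul_le_mul_of_nonneg_left hq (by linarith [hF.1 _ (one_le_one_sub_log hr hr1)])
      _ = 2 * 2 ^ s * H * (F (1 - log r) * r ^ s) := by
          rw [mul_rpow zero_le_two hr.le]; ring
      _ ≤ 2 * 2 ^ s * H * K := by gcongr; exact hweight r hr hr1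
      _ = 2 * 2 ^ s * K * H := by ring
  have hosc : ∀ c r, 0 < r → r ≤ 1 →
      F (1 - log r) * ⨍ y in ball c r, |f y - ballAvg f c r| ≤ 2 * 2 ^ s * K * H :=
    fun c r hr hr1 => hweighted r hr hr1 _ <|
      (setAverage_abs_sub_ballAvg_le hH hs.le hf hloc hr).trans
        (le_mul_of_one_le_left (by positivity) one_le_two)
  have hpair : ∀ c₁ r₁ c₂ r₂, 0 < r₂ → 0 < r₁ → r₁ ≤ 1 → ball c₂ (2 * r₂) ⊆ ball c₁ r₁ →
      F (1 - log r₁) * |ballAvg f c₂ r₂ - ballAvg f c₁ r₁| ≤ 2 * 2 ^ s * K * H :=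
    fun c₁ r₁ c₂ r₂ hr₂ hr₁ hr₁1 hsub =>
      hweighted r₁ hr₁ hr₁1 _ (abs_ballAvg_sub_ballAvg_le hH hs.le hf hloc hr₁ hr₂ hsub)
  refine ⟨⟨hloc, _, hosc, hpair⟩, (lmoFNorm_le (by positivity) hosc hpair).trans ?_⟩
  nlinarith [mul_nonneg (by positivity : (0 : ℝ) ≤ 4 * 2 ^ s * K) hM0]

/-- For `F ∈ 𝓕` and `0 < s < 1`, the Hölder space `C^s(ℝ²)` embeds
continuously into `LMO_F`: `‖f‖_{LMO_F} ≤ C ‖f‖_{C^s} = C(‖f‖_∞ + [f]_{C^s})`. -/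
theorem holder_embeds_lmoF (F : ℝ → ℝ) (hF : ClassF F)
    (s : ℝ) (hs : 0 < s) (hs1 : s < 1) :
    ∃ C : ℝ, 0 < C ∧
      ∀ (f : Plane → ℝ) (M H : ℝ), Measurable f →
        (∀ x, |f x| ≤ M) →
        (∀ x y : Plane, |f x - f y| ≤ H * ‖x - y‖ ^ s) →
        MemLMOF F f ∧ lmoFNorm F f ≤ C * (M + H) :=
  holder_embeds_lmoF_general F hF s hs
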